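/- Let D be a free semi-theory, P the initial semi-theory, and n, k ≥ 0. For every functor X : D → SSet, the commutative square of simplicial mapping complexes with top row Map_D(D̄_n^{k+1}, X) → Map_D(D̄_n^k, X), bottom row Map_P(sD̄_n^{k+1}, X) → Map_P(D̄_n^k, X) (all maps induced by the inclusions of subdiagrams and by restriction along P → D) is a pullback square of simplicial sets. -/

import Mathlib

open CategoryTheory Limits Topology Topology.Homotopy

noncomputable section

namespace SemiThPaper

/-! ### Weak homotopy equivalences -/

/-- The map induced by a continuous map on homotopy "groups" (sets for `N = Fin 0`). -/
def HomotopyGroup.map {X Y : Type} [TopologicalSpace X] [TopologicalSpace Y]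
    (f : C(X, Y)) (N : Type) (x : X) :
    HomotopyGroup N X x → HomotopyGroup N Y (f x) :=
  Quotient.map
    (fun g => ⟨f.comp g.1, fun y hy => by
      simp only [ContinuousMap.comp_apply]
      rw [g.2 y hy]⟩)
    (fun g h H => H.elim fun H => ⟨H.compContinuousMap f⟩)

/-- The map induced on path components. -/
def ZerothHomotopy.map {X Y : Type} [TopologicalSpace X] [TopologicalSpace Y]
    (f : C(X, Y)) : ZerothHomotopy X → ZerothHomotopy Y :=
  Quotient.map f (fun _ _ h => h.elim fun γ => ⟨γ.map f.continuous⟩)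

/-- A weak homotopy equivalence of topological spaces: a continuous map inducing a
bijection on path components and on all homotopy groups at all basepoints. -/
def IsWeakHomotopyEquiv {X Y : TopCat} (f : X ⟶ Y) : Prop :=
  Function.Bijective (ZerothHomotopy.map (f.hom : C(X, Y))) ∧
    ∀ (n : ℕ) (x : X), Function.Bijective (HomotopyGroup.map (f.hom : C(X, Y)) (Fin n) x)

/-- A weak equivalence of simplicial sets: a map whose geometric realization is a
weak homotopy equivalence. -/
def WeakEquiv {A B : SSet} (f : A ⟶ B) : Prop :=
  IsWeakHomotopyEquiv (SSet.toTop.map f)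


/-! ### Semi-theories -/

/-- The objects `[1], [2], [3], …` of a semi-theory, indexed by positive integers. -/
@[ext]
structure Ob : Type where
  val : ℕ+

instance : Coe ℕ+ Ob := ⟨Ob.mk⟩

/-- An (unpointed) semi-theory: a category with objects `[1], [2], …`
together with distinguished projection morphisms `p^n_k : [n] ⟶ [1]`, where `p^1_1 = 𝟙 [1]`. -/
structure SemiTheory : Type 1 where
  cat : Category.{0, 0} Ob
  proj : ∀ n : ℕ+, Fin n → @Quiver.Hom Ob cat.toCategoryStruct.toQuiver ⟨n⟩ ⟨1⟩
  proj_one : proj 1 ⟨0, Nat.one_pos⟩ = cat.toCategoryStruct.id ⟨1⟩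

/-- The category of diagrams of simplicial sets over (the underlying category of)
a semi-theory. -/
abbrev SemiTheory.Diag (S : SemiTheory) : Type 1 :=
  @CategoryTheory.Functor Ob S.cat SSet _

/-- The `n`-fold levelwise power of a simplicial set. -/
@[simps]
def finPow (n : ℕ+) (A : SSet) : SSet where
  obj m := Fin n → A.obj m
  map θ := ↾(fun a k => A.map θ (a k))

/-- The canonical comparison map `X[n] ⟶ X[1]^n` of a diagram over a semi-theory,
whose components are induced by the projections. -/
def SemiTheory.projFan (S : SemiTheory) (X : S.Diag) (n : ℕ+) :
    (letI := S.cat; (X.obj ⟨n⟩ ⟶ finPow n (X.obj ⟨1⟩))) :=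
  letI := S.cat
  { app := fun m => ↾(fun a k => (X.map (S.proj n k)).app m a)
    naturality := fun m m' θ => by
      refine ConcreteCategory.hom_ext _ _ fun a => ?_
      funext k
      exact types_congr_hom ((X.map (S.proj n k)).naturality θ) a }

/-- A strict algebra over a semi-theory: the comparison maps `X[n] ⟶ X[1]^n` are
isomorphisms for all `n > 1`. -/
def SemiTheory.IsStrictAlgebra (S : SemiTheory) (X : S.Diag) : Prop :=
  ∀ n : ℕ+, 1 < (n : ℕ) → IsIso (S.projFan X n)

/-- A homotopy algebra over a semi-theory: the comparison maps `X[n] ⟶ X[1]^n` are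
weak equivalences of simplicial sets for all `n > 1`. -/
def SemiTheory.IsHomotopyAlgebra (S : SemiTheory) (X : S.Diag) : Prop :=
  ∀ n : ℕ+, 1 < (n : ℕ) → WeakEquiv (S.projFan X n)

/-- A semi-theory is an algebraic theory if composition with the projections induces
bijections `Hom([m],[n]) ≅ Hom([m],[1])^n` for all `m` and all `n > 1`. -/
def SemiTheory.IsAlgebraic (S : SemiTheory) : Prop :=
  letI := S.cat
  ∀ (m n : ℕ+), 1 < (n : ℕ) →
    Function.Bijective (fun (f : (⟨m⟩ : Ob) ⟶ ⟨n⟩) (k : Fin n) => f ≫ S.proj n k)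

/-- The comparison map `X[n] ⟶ X[1]^n` for a diagram of simplicial sets over any
category equipped with objects `[n]` and projection morphisms. -/
def projFanAt {C : Type} [Category.{0} C] (o : ℕ+ → C) (p : ∀ n : ℕ+, Fin n → (o n ⟶ o 1))
    (X : C ⥤ SSet) (n : ℕ+) : X.obj (o n) ⟶ finPow n (X.obj (o 1)) where
  app m := ↾(fun a k => (X.map (p n k)).app m a)
  naturality m m' θ := by
    refine ConcreteCategory.hom_ext _ _ fun a => ?_
    funext k
    exact types_congr_hom ((X.map (p n k)).naturality θ) a

/-- Strictness of a diagram with respect to given objects and projections. -/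
def IsStrictAt {C : Type} [Category.{0} C] (o : ℕ+ → C)
    (p : ∀ n : ℕ+, Fin n → (o n ⟶ o 1)) (X : C ⥤ SSet) : Prop :=
  ∀ n : ℕ+, 1 < (n : ℕ) → IsIso (projFanAt o p X n)

/-- The homotopy-algebra condition for a diagram with respect to given objects
and projections. -/
def IsHomotopyAt {C : Type} [Category.{0} C] (o : ℕ+ → C)
    (p : ∀ n : ℕ+, Fin n → (o n ⟶ o 1)) (X : C ⥤ SSet) : Prop :=
  ∀ n : ℕ+, 1 < (n : ℕ) → WeakEquiv (projFanAt o p X n)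

/-! ### Free semi-theories -/

/-- Generating data for a free semi-theory: a family of free generators that are
not projections (the projections are added separately as free generators). -/
structure GenData : Type 1 where
  gen : ℕ+ → ℕ+ → Type

/-- The generating quiver of the free semi-theory on `G`: the generators of `G`
together with projection arrows `p^n_k : [n] → [1]` for `n > 1`
(the projection `p^1_1` is the identity, i.e. the empty path). -/
inductive Arr (G : GenData) : ℕ+ → ℕ+ → Type
  | gen {a b : ℕ+} : G.gen a b → Arr G a b
  | proj {n : ℕ+} (h : 1 < (n : ℕ)) (k : Fin n) : Arr G n 1

/-- The object type of the free semi-theory on `G` (a copy of `Ob`). -/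
def FreeOb (G : GenData) : Type := Ob

instance freeQuiver (G : GenData) : Quiver (FreeOb G) :=
  ⟨fun a b => Arr G (Ob.val a) (Ob.val b)⟩

/-- The free semi-theory on `G`, as a category: the paths category on the
generating quiver. -/
abbrev FreeST (G : GenData) := CategoryTheory.Paths (FreeOb G)

/-- The object `[n]` of the free semi-theory. -/
def FreeST.of (G : GenData) (n : ℕ+) : FreeST G := (⟨n⟩ : Ob)

/-- The generating projection arrow, as an arrow of the generating quiver. -/
def projArr (G : GenData) {n : ℕ+} (h : 1 < (n : ℕ)) (k : Fin n) :
    @Quiver.Hom (FreeOb G) _ (FreeST.of G n) (FreeST.of G 1) := Arr.proj h k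

/-- The projection `p^n_k` in the free semi-theory. -/
def projPath (G : GenData) (n : ℕ+) (k : Fin n) : FreeST.of G n ⟶ FreeST.of G 1 :=
  if h : 1 < (n : ℕ) then (projArr G h k).toPath
  else eqToHom (congrArg (FreeST.of G)
    (PNat.coe_injective (by
      rw [PNat.one_coe]
      exact le_antisymm (not_lt.1 h) n.pos)))

/-- The free semi-theory on `G`, as a semi-theory. -/
def freeSemiTheory (G : GenData) : SemiTheory where
  cat := inferInstanceAs (Category (FreeST G))
  proj n k := projPath G n k
  proj_one := by
    show projPath G 1 ⟨0, Nat.one_pos⟩ = _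
    rw [projPath, dif_neg (by norm_num)]
    rfl

/-- The initial semi-theory `P` has no generators besides the projections. -/
def emptyGen : GenData := ⟨fun _ _ => PEmpty⟩

/-- The underlying category of the initial semi-theory `P`. -/
abbrev PCat := FreeST emptyGen

/-- The initial semi-theory `P`: its only non-identity morphisms are the projections. -/
def PTheory : SemiTheory := freeSemiTheory emptyGen

/-- The action of the unique morphism of semi-theories `P ⟶ C` on generating arrows. -/
def jArr (G : GenData) : ∀ {a b : ℕ+}, Arr emptyGen a b →
    @Quiver.Path (FreeOb G) _ ((⟨a⟩ : Ob) : FreeST G) ((⟨b⟩ : Ob) : FreeST G)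
  | _, _, .gen α => α.elim
  | _, _, .proj h k => (projArr G h k).toPath

/-- The unique morphism of semi-theories `P ⟶ C` into a free semi-theory. -/
def Jfree (G : GenData) : PCat ⥤ FreeST G :=
  Paths.lift
    { obj := fun n => (n : FreeST G)
      map := fun {a b} e => jArr G e }

/-! ### The completion of a free semi-theory -/

/-- Trees representing the morphisms `[n] ⟶ [1]` of the completion `C̄` of a free
semi-theory: either a single edge labelled by a projection `p^n_k`, or a tree whose
lowest edge is labelled by a component `α_i` of a non-projection generator
`α : [m] ⟶ [r]` and which is obtained by grafting `m` smaller trees. -/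
inductive CTree (G : GenData) (n : ℕ+) : Type
  | proj (k : Fin n) : CTree G n
  | node {m r : ℕ+} (α : G.gen m r) (i : Fin r) (ts : Fin m → CTree G n) : CTree G n

/-- Morphisms `[n] ⟶ [m]` in the completion: `m`-tuples of trees. -/
def CompHom (G : GenData) (n m : ℕ+) : Type := Fin m → CTree G n

/-- Grafting: substituting the trees `T k` for the initial edges labelled `p^m_k`. -/
def CTree.graft {G : GenData} {n m : ℕ+} : CTree G m → CompHom G n m → CTree G n
  | .proj k, T => T k
  | .node α i ts, T => .node α i (fun j => (ts j).graft T)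

/-- The identity of the completion. -/
def compId (G : GenData) (n : ℕ+) : CompHom G n n := fun k => .proj k

/-- Composition in the completion, by grafting. -/
def compComp {G : GenData} {a b c : ℕ+} (T : CompHom G a b) (S : CompHom G b c) :
    CompHom G a c :=
  fun j => (S j).graft T

theorem CTree.graft_id {G : GenData} {m : ℕ+} (t : CTree G m) :
    t.graft (compId G m) = t := by
  induction t with
  | proj k => rfl
  | node α i ts ih =>
      simp only [CTree.graft]
      congr 1
      funext j
      exact ih j

theorem CTree.graft_graft {G : GenData} {a b c : ℕ+} (s : CTree G c)
    (U : CompHom G b c) (T : CompHom G a b) :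
    (s.graft U).graft T = s.graft (compComp T U) := by
  induction s with
  | proj k => rfl
  | node α i ts ih =>
      simp only [CTree.graft]
      congr 1
      funext j
      exact ih j

/-- The object type of the completion (a copy of `Ob`). -/
def CompOb (G : GenData) : Type := Ob

/-- The completion `C̄` of a free semi-theory, as a category. -/
instance compCategory (G : GenData) : Category (CompOb G) where
  Hom n m := CompHom G (Ob.val n) (Ob.val m)
  id n := compId G _
  comp f g := compComp f g
  id_comp f := funext fun j => CTree.graft_id _
  comp_id f := rfl
  assoc f g h := funext fun j => (CTree.graft_graft _ _ _).symm

/-- The object `[n]` of the completion. -/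
def CompOb.of (G : GenData) (n : ℕ+) : CompOb G := (⟨n⟩ : Ob)

/-- The projection `p̂^n_k` of the completion: a single edge labelled `p^n_k`. -/
def compProj (G : GenData) (n : ℕ+) (k : Fin n) : CompOb.of G n ⟶ CompOb.of G 1 :=
  fun _ => .proj k

/-- The completion, as a semi-theory. -/
def compSemiTheory (G : GenData) : SemiTheory where
  cat := inferInstanceAs (Category (CompOb G))
  proj n k := compProj G n k
  proj_one := by
    funext i
    have h0 : i = ⟨0, Nat.one_pos⟩ := Fin.ext (Nat.lt_one_iff.mp i.isLt)
    rw [h0]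
    rfl

/-- The completion functor `Φ` on generating arrows. -/
def phiArr (G : GenData) : ∀ {a b : ℕ+}, Arr G a b → CompHom G a b
  | _, _, .gen α => fun i => .node α i (fun k => .proj k)
  | _, _, .proj _ k => fun _ => .proj k

/-- The completion functor `Φ_C : C ⟶ C̄` of a free semi-theory. -/
def phi (G : GenData) : FreeST G ⥤ CompOb G :=
  Paths.lift
    { obj := fun n => (n : CompOb G)
      map := fun {a b} e => phiArr G e }

/-! ### Discrete simplicial sets, products, mapping complexes -/

/-- The discrete simplicial set on a type. -/
@[simps]
def disc (A : Type) : SSet where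
  obj _ := A
  map _ := ↾id

/-- The map of discrete simplicial sets induced by a function. -/
@[simps]
def disc.map {A B : Type} (f : A → B) : disc A ⟶ disc B where
  app _ := ↾f

/-- The diagram of (discrete) simplicial sets corepresented by the object `[n]`
of a semi-theory. -/
def SemiTheory.corep (S : SemiTheory) (n : ℕ+) : S.Diag :=
  letI := S.cat
  { obj := fun m => disc ((⟨n⟩ : Ob) ⟶ m)
    map := fun f => disc.map (fun g => g ≫ f)
    map_id := fun m => by
      apply NatTrans.ext
      funext x; refine ConcreteCategory.hom_ext _ _ fun (g : (⟨n⟩ : Ob) ⟶ m) => ?_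
      show g ≫ 𝟙 m = g
      simp
    map_comp := fun f f' => by
      apply NatTrans.ext
      funext x; refine ConcreteCategory.hom_ext _ _ fun (g : (⟨n⟩ : Ob) ⟶ _) => ?_
      show g ≫ (_ ≫ _) = _
      rw [← Category.assoc]
      rfl }

/-- Levelwise product of two simplicial sets. -/
@[simps]
def mulC (A K : SSet) : SSet where
  obj m := A.obj m × K.obj m
  map θ := ↾(fun p => (A.map θ p.1, K.map θ p.2))
  map_id m := by refine ConcreteCategory.hom_ext _ _ fun p => ?_; simp
  map_comp f g := by refine ConcreteCategory.hom_ext _ _ fun p => ?_; simp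

/-- `f × id` on levelwise products. -/
@[simps]
def mulC.mapLeft {A B : SSet} (f : A ⟶ B) (K : SSet) : mulC A K ⟶ mulC B K where
  app m := ↾(fun p => (f.app m p.1, p.2))
  naturality m m' θ := by
    refine ConcreteCategory.hom_ext _ _ fun (p : A.obj m × K.obj m) => ?_
    simp only [mulC_obj, mulC_map, types_comp_apply]
    show (f.app m' (A.map θ p.1), K.map θ p.2) = (B.map θ (f.app m p.1), K.map θ p.2)
    exact Prod.ext (FunctorToTypes.naturality f θ p.1) rfl

/-- `id × g` on levelwise products. -/
@[simps]
def mulC.mapRight (A : SSet) {K L : SSet} (g : K ⟶ L) : mulC A K ⟶ mulC A L where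
  app m := ↾(fun p => (p.1, g.app m p.2))
  naturality m m' θ := by
    refine ConcreteCategory.hom_ext _ _ fun (p : A.obj m × K.obj m) => ?_
    simp only [mulC_obj, mulC_map, types_comp_apply]
    show (A.map θ p.1, g.app m' (K.map θ p.2)) = (A.map θ p.1, L.map θ (g.app m p.2))
    exact Prod.ext rfl (FunctorToTypes.naturality g θ p.2)

theorem mulC.mapRight_id (A K : SSet) : mulC.mapRight A (𝟙 K) = 𝟙 (mulC A K) := by
  apply NatTrans.ext; funext x; refine ConcreteCategory.hom_ext _ _ fun p => ?_; rfl

theorem mulC.mapRight_comp (A : SSet) {K L M : SSet} (g : K ⟶ L) (h : L ⟶ M) :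
    mulC.mapRight A (g ≫ h) = mulC.mapRight A g ≫ mulC.mapRight A h := by
  apply NatTrans.ext; funext x; refine ConcreteCategory.hom_ext _ _ fun p => ?_; rfl

/-- Naturality, in applied form. -/
theorem natApply {C : Type} [Category C] {X Y : C ⥤ SSet} (f : X ⟶ Y)
    {c c' : C} (φ : c ⟶ c') (x : SimplexCategoryᵒᵖ) (a : (X.obj c).obj x) :
    (f.app c').app x ((X.map φ).app x a) = (Y.map φ).app x ((f.app c).app x a) :=
  types_congr_hom (NatTrans.congr_app (f.naturality φ) x) a

/-- The objectwise product of a diagram of simplicial sets with a constant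
simplicial set. -/
@[simps]
def prodConst {C : Type} [Category C] (X : C ⥤ SSet) (K : SSet) : C ⥤ SSet where
  obj c := mulC (X.obj c) K
  map f := mulC.mapLeft (X.map f) K
  map_id c := by
    apply NatTrans.ext; funext x; refine ConcreteCategory.hom_ext _ _ fun p => ?_
    show ((X.map (𝟙 c)).app x p.1, p.2) = p
    rw [X.map_id]
    rfl
  map_comp f g := by
    apply NatTrans.ext; funext x; refine ConcreteCategory.hom_ext _ _ fun p => ?_
    show ((X.map (f ≫ g)).app x p.1, p.2) = _
    rw [X.map_comp]
    rfl

/-- Functoriality of `prodConst` in the diagram variable. -/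
@[simps]
def prodConst.mapX {C : Type} [Category C] {X X' : C ⥤ SSet} (f : X ⟶ X') (K : SSet) :
    prodConst X K ⟶ prodConst X' K where
  app c := mulC.mapLeft (f.app c) K
  naturality c c' φ := by
    apply NatTrans.ext; funext x; refine ConcreteCategory.hom_ext _ _ fun p => ?_
    simp only [prodConst_obj, prodConst_map, NatTrans.comp_app, mulC.mapLeft_app,
      types_comp_apply]
    exact Prod.ext (natApply f φ x p.1) rfl

/-- Functoriality of `prodConst` in the constant variable. -/
@[simps]
def prodConst.mapK {C : Type} [Category C] (X : C ⥤ SSet) {K L : SSet} (g : K ⟶ L) :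
    prodConst X K ⟶ prodConst X L where
  app c := mulC.mapRight (X.obj c) g
  naturality c c' φ := by
    apply NatTrans.ext; funext x; refine ConcreteCategory.hom_ext _ _ fun p => ?_
    rfl

theorem prodConst.mapK_id {C : Type} [Category C] (X : C ⥤ SSet) (K : SSet) :
    prodConst.mapK X (𝟙 K) = 𝟙 (prodConst X K) := by
  apply NatTrans.ext; funext c
  exact mulC.mapRight_id _ _

theorem prodConst.mapK_comp {C : Type} [Category C] (X : C ⥤ SSet) {K L M : SSet}
    (g : K ⟶ L) (h : L ⟶ M) :
    prodConst.mapK X (g ≫ h) = prodConst.mapK X g ≫ prodConst.mapK X h := by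
  apply NatTrans.ext; funext c
  exact mulC.mapRight_comp _ _ _

/-- The standard simplex `Δ[k]`, for `k : SimplexCategoryᵒᵖ`. -/
def stdS (k : SimplexCategoryᵒᵖ) : SSet := SSet.stdSimplex.obj k.unop

/-- Functoriality of the standard simplex (contravariantly in `SimplexCategoryᵒᵖ`). -/
def stdMap {k l : SimplexCategoryᵒᵖ} (θ : k ⟶ l) : stdS l ⟶ stdS k :=
  SSet.stdSimplex.map θ.unop

theorem stdMap_id (k : SimplexCategoryᵒᵖ) : stdMap (𝟙 k) = 𝟙 (stdS k) :=
  CategoryTheory.Functor.map_id _ _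

theorem stdMap_comp {k l m : SimplexCategoryᵒᵖ} (θ : k ⟶ l) (η : l ⟶ m) :
    stdMap (θ ≫ η) = stdMap η ≫ stdMap θ :=
  CategoryTheory.Functor.map_comp _ _ _

/-- The simplicial mapping complex of two diagrams of simplicial sets: its
`m`-simplices are the natural transformations `X × Δ[m] ⟶ Y`. -/
def MapCx {C : Type} [Category C] (X Y : C ⥤ SSet) : SSet where
  obj m := prodConst X (stdS m) ⟶ Y
  map {m m'} θ := ↾(fun t => prodConst.mapK X (stdMap θ) ≫ t)
  map_id m := by
    refine ConcreteCategory.hom_ext _ _ fun t => ?_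
    simp [stdMap_id, prodConst.mapK_id]
  map_comp θ η := by
    refine ConcreteCategory.hom_ext _ _ fun t => ?_
    simp [stdMap_comp, prodConst.mapK_comp]

/-- Precomposition on mapping complexes. -/
def MapCx.pre {C : Type} [Category C] {X X' : C ⥤ SSet} (f : X' ⟶ X) (Y : C ⥤ SSet) :
    MapCx X Y ⟶ MapCx X' Y where
  app m := ↾(fun t => prodConst.mapX f (stdS m) ≫ t)
  naturality m m' θ := by
    refine ConcreteCategory.hom_ext _ _ fun t => ?_
    rfl

/-- Postcomposition on mapping complexes. -/
def MapCx.post {C : Type} [Category C] (X : C ⥤ SSet) {Y Y' : C ⥤ SSet} (g : Y ⟶ Y') :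
    MapCx X Y ⟶ MapCx X Y' where
  app m := ↾(fun t => t ≫ g)
  naturality m m' θ := by
    refine ConcreteCategory.hom_ext _ _ fun t => ?_
    rfl

/-- Restriction of mapping complexes along a functor. -/
def MapCx.whisk {C D : Type} [Category C] [Category D] (F : D ⥤ C) (X Y : C ⥤ SSet) :
    MapCx X Y ⟶ MapCx (F ⋙ X) (F ⋙ Y) where
  app m := ↾(fun t =>
    (show prodConst (F ⋙ X) (stdS m) ⟶ F ⋙ Y from CategoryTheory.Functor.whiskerLeft F t))
  naturality m m' θ := by
    refine ConcreteCategory.hom_ext _ _ fun t => ?_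
    rfl

/-- The simplicial mapping complex of two simplicial sets: its `m`-simplices are
the maps `A × Δ[m] ⟶ B`. -/
def sMap (A B : SSet) : SSet where
  obj m := mulC A (stdS m) ⟶ B
  map {m m'} θ := ↾(fun t => mulC.mapRight A (stdMap θ) ≫ t)
  map_id m := by
    refine ConcreteCategory.hom_ext _ _ fun t => ?_
    simp [stdMap_id, mulC.mapRight_id]
  map_comp θ η := by
    refine ConcreteCategory.hom_ext _ _ fun t => ?_
    simp [stdMap_comp, mulC.mapRight_comp]

/-- Precomposition on simplicial mapping complexes. -/
def sMap.pre {A A' : SSet} (f : A' ⟶ A) (B : SSet) : sMap A B ⟶ sMap A' B where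
  app m := ↾(fun t => mulC.mapLeft f (stdS m) ≫ t)
  naturality m m' θ := by
    refine ConcreteCategory.hom_ext _ _ fun t => ?_
    rfl

/-- Postcomposition on simplicial mapping complexes. -/
def sMap.post (A : SSet) {B B' : SSet} (g : B ⟶ B') : sMap A B ⟶ sMap A B' where
  app m := ↾(fun t => t ≫ g)
  naturality m m' θ := by
    refine ConcreteCategory.hom_ext _ _ fun t => ?_
    rfl

/-! ### Decompositions of morphisms of a free semi-theory -/

/-- Whether a generating arrow is a generator of `G` (as opposed to a projection). -/
def Arr.isGen {G : GenData} : ∀ {a b : ℕ+}, Arr G a b → Prop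
  | _, _, .gen _ => True
  | _, _, .proj _ _ => False

/-- A morphism `φ = α_k ∘ ⋯ ∘ α_1` of a free semi-theory (a path in the generating
quiver) starts with a non-projection: `α_1` is not a projection. -/
def startsNonProj {G : GenData} : ∀ {a b : FreeOb G}, Quiver.Path a b → Prop
  | _, _, .nil => False
  | _, _, .cons .nil e => Arr.isGen e
  | _, _, .cons (.cons p e') _ => startsNonProj (Quiver.Path.cons p e')

/-- The first `j` arrows of a path (together with their target). -/
def pathTake {V : Type} [Quiver.{1} V] {a : V} : ∀ {b : V}, Quiver.Path a b → ℕ → Σ c : V, Quiver.Path a c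
  | _, .nil, _ => ⟨a, .nil⟩
  | b, .cons p e, j => if j ≤ p.length then pathTake p j else ⟨b, .cons p e⟩

/-! ### The diagram `D̄_n` and its filtrations -/

/-- The `D`-diagram `D̄_n` with `D̄_n[m] = Hom_{D̄}([n],[m])`, where the `D`-action
is given by composition via the completion functor `Φ`. -/
def barDn (G : GenData) (n : ℕ+) : FreeST G ⥤ SSet where
  obj m := disc (CompOb.of G n ⟶ (phi G).obj m)
  map {a b} ψ := disc.map (fun T => T ≫ (phi G).map ψ)
  map_id a := by
    apply NatTrans.ext
    funext x; refine ConcreteCategory.hom_ext _ _ fun (T : CompOb.of G n ⟶ (phi G).obj a) => ?_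
    show T ≫ (phi G).map (𝟙 a) = T
    erw [CategoryTheory.Functor.map_id, Category.comp_id]
  map_comp {a b c} ψ ψ' := by
    apply NatTrans.ext
    funext x; refine ConcreteCategory.hom_ext _ _ fun (T : CompOb.of G n ⟶ (phi G).obj a) => ?_
    show T ≫ (phi G).map (ψ ≫ ψ') = (T ≫ (phi G).map ψ) ≫ (phi G).map ψ'
    erw [CategoryTheory.Functor.map_comp, Category.assoc]

/-- The filtration of `D̄_n` by sub-`D`-diagrams:
`D̄_n^0 = D_n` (the image of the corepresented diagram) and `D̄_n^{k+1}` is the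
smallest sub-`D`-diagram containing all tuples of elements of `D̄_n^k[1]`. -/
def Filt (G : GenData) (n : ℕ+) : ℕ → ∀ m : ℕ+, Set (CompHom G n m)
  | 0, m => {T | ∃ ψ : FreeST.of G n ⟶ FreeST.of G m, T = (phi G).map ψ}
  | k+1, m => {T | ∃ (m' : ℕ+) (S : CompHom G n m')
      (ψ : FreeST.of G m' ⟶ FreeST.of G m),
      (∀ j : Fin m', (fun _ : Fin 1 => S j) ∈ Filt G n k 1) ∧
        T = (S : CompOb.of G n ⟶ CompOb.of G m') ≫ (phi G).map ψ}

/-- The filtration of `D̄_n` by sub-`P`-diagrams: `sD̄_n^0 = D_n` and `sD̄_n^{k+1}` is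
the smallest sub-`P`-diagram containing all tuples of elements of `D̄ₙ^k[1]`. -/
def sFilt (G : GenData) (n : ℕ+) : ℕ → ∀ m : ℕ+, Set (CompHom G n m)
  | 0, m => Filt G n 0 m
  | k+1, m => {T | ∀ j : Fin m, (fun _ : Fin 1 => T j) ∈ Filt G n k 1}

theorem Filt.closed (G : GenData) (n : ℕ+) (k : ℕ) {a b : ℕ+}
    {T : CompOb.of G n ⟶ CompOb.of G a} (hT : T ∈ Filt G n k a)
    (ψ : FreeST.of G a ⟶ FreeST.of G b) : T ≫ (phi G).map ψ ∈ Filt G n k b := by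
  cases k with
  | zero =>
      obtain ⟨ψ₀, rfl⟩ := hT
      exact ⟨ψ₀ ≫ ψ, by rw [CategoryTheory.Functor.map_comp]; rfl⟩
  | succ k =>
      obtain ⟨m', S, ψ₁, hS, rfl⟩ := hT
      exact ⟨m', S, ψ₁ ≫ ψ, hS, by erw [CategoryTheory.Functor.map_comp, Category.assoc]; rfl⟩

theorem phi_map_toPath (G : GenData) {a b : FreeOb G}
    (e : @Quiver.Hom (FreeOb G) _ a b) :
    (phi G).map e.toPath = phiArr G e :=
  Paths.lift_toPath _ _

theorem Filt.comp_proj (G : GenData) (n : ℕ+) (k : ℕ) {m : ℕ+} {T : CompHom G n m}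
    (hT : T ∈ Filt G n k m) (j : Fin m) : (fun _ : Fin 1 => T j) ∈ Filt G n k 1 := by
  by_cases h : 1 < (m : ℕ)
  · have hc := Filt.closed G n k hT (projPath G m j)
    have he : (T : CompOb.of G n ⟶ CompOb.of G m) ≫ (phi G).map (projPath G m j)
        = (fun _ : Fin 1 => T j) := by
      unfold projPath
      rw [dif_pos h]
      rw [phi_map_toPath G (projArr G h j)]
      rfl
    erw [he] at hc; exact hc
  · have hm : m = 1 := PNat.coe_injective (by
      rw [PNat.one_coe]
      exact le_antisymm (not_lt.1 h) m.pos)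
    subst hm
    have ht : (fun _ : Fin 1 => T j) = T := by
      funext i
      congr 1
      exact Fin.ext (by
        rw [Nat.lt_one_iff.mp i.isLt, Nat.lt_one_iff.mp j.isLt])
    rwa [ht]

theorem sFilt.closed_arr (G : GenData) (n : ℕ+) (k : ℕ) {c b : ℕ+}
    {T : CompHom G n c} (hT : T ∈ sFilt G n k c) (e : Arr emptyGen c b) :
    (T : CompOb.of G n ⟶ CompOb.of G c) ≫ (phi G).map (jArr G e) ∈ sFilt G n k b := by
  cases e with
  | gen α => exact α.elim
  | proj h j =>
      have h1 : (phi G).map (jArr G (Arr.proj h j)) = phiArr G (Arr.proj h j) := by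
        show (phi G).map (projArr G h j).toPath = _
        exact phi_map_toPath G _
      rw [h1]
      show (fun _ : Fin 1 => T j) ∈ sFilt G n k 1
      cases k with
      | zero => exact Filt.comp_proj G n 0 hT j
      | succ k' => intro i; exact hT j

theorem sFilt.closed (G : GenData) (n : ℕ+) (k : ℕ) {a b : PCat}
    {T : CompOb.of G n ⟶ CompOb.of G (Ob.val a)} (hT : T ∈ sFilt G n k (Ob.val a))
    (ψ : a ⟶ b) :
    T ≫ (phi G).map ((Jfree G).map ψ) ∈ sFilt G n k (Ob.val b) := by
  change @Quiver.Path (FreeOb emptyGen) _ a b at ψ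
  induction ψ with
  | nil => exact hT
  | cons p e ih =>
      have h1 : (phi G).map ((Jfree G).map (Quiver.Path.cons p e))
          = (phi G).map ((Jfree G).map p) ≫ (phi G).map (jArr G e) := by
        show (phi G).map ((Jfree G).map (p ≫ Quiver.Hom.toPath e)) = _
        have hj : (Jfree G).map (Quiver.Hom.toPath e) = jArr G e := Paths.lift_toPath _ _
        exact (congrArg (phi G).map (((Jfree G).map_comp p _).trans
          (congrArg ((Jfree G).map p ≫ ·) hj))).trans ((phi G).map_comp _ _)
      have h3 : T ≫ (phi G).map ((Jfree G).map (Quiver.Path.cons p e))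
          = (T ≫ (phi G).map ((Jfree G).map p)) ≫ (phi G).map (jArr G e) :=
        (congrArg (T ≫ ·) h1).trans (Category.assoc _ _ _).symm
      exact (congrArg (fun t => t ∈ sFilt G n k _) h3).mpr (sFilt.closed_arr G n k ih e)

/-- The sub-`D`-diagram `D̄_n^k` of `D̄_n`. -/
def FiltDiag (G : GenData) (n : ℕ+) (k : ℕ) : FreeST G ⥤ SSet where
  obj m := disc (Filt G n k (Ob.val m))
  map {a b} ψ := disc.map (fun T => ⟨T.1 ≫ (phi G).map ψ, Filt.closed G n k T.2 ψ⟩)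
  map_id a := by
    apply NatTrans.ext
    funext x; refine ConcreteCategory.hom_ext _ _ fun (T : Filt G n k (Ob.val a)) => ?_
    apply Subtype.ext
    show T.1 ≫ (phi G).map (𝟙 a) = T.1
    erw [CategoryTheory.Functor.map_id, Category.comp_id]
  map_comp {a b c} ψ ψ' := by
    apply NatTrans.ext
    funext x; refine ConcreteCategory.hom_ext _ _ fun (T : Filt G n k (Ob.val a)) => ?_
    apply Subtype.ext
    show T.1 ≫ (phi G).map (ψ ≫ ψ') = (T.1 ≫ (phi G).map ψ) ≫ (phi G).map ψ'
    erw [CategoryTheory.Functor.map_comp, Category.assoc]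

/-- The sub-`P`-diagram `sD̄_n^k` of `D̄_n`. -/
def sFiltDiag (G : GenData) (n : ℕ+) (k : ℕ) : PCat ⥤ SSet where
  obj m := disc (sFilt G n k (Ob.val m))
  map {a b} ψ := disc.map (fun T => ⟨T.1 ≫ (phi G).map ((Jfree G).map ψ),
    sFilt.closed G n k T.2 ψ⟩)
  map_id a := by
    apply NatTrans.ext
    funext x; refine ConcreteCategory.hom_ext _ _ fun (T : sFilt G n k (Ob.val a)) => ?_
    apply Subtype.ext
    show T.1 ≫ (phi G).map ((Jfree G).map (𝟙 a)) = T.1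
    erw [CategoryTheory.Functor.map_id, Category.comp_id]
  map_comp {a b c} ψ ψ' := by
    apply NatTrans.ext
    funext x; refine ConcreteCategory.hom_ext _ _ fun (T : sFilt G n k (Ob.val a)) => ?_
    apply Subtype.ext
    show T.1 ≫ (phi G).map ((Jfree G).map (ψ ≫ ψ')) =
      (T.1 ≫ (phi G).map ((Jfree G).map ψ)) ≫ (phi G).map ((Jfree G).map ψ')
    erw [CategoryTheory.Functor.map_comp, CategoryTheory.Functor.map_comp, Category.assoc]


theorem Filt.mono (G : GenData) (n : ℕ+) (k : ℕ) (m : ℕ+) :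
    Filt G n k m ⊆ Filt G n (k+1) m := by
  intro T hT
  exact ⟨m, T, 𝟙 _, fun j => Filt.comp_proj G n k hT j,
    by erw [CategoryTheory.Functor.map_id, Category.comp_id]⟩

theorem Filt.subset_sFilt (G : GenData) (n : ℕ+) (k : ℕ) (m : ℕ+) :
    Filt G n k m ⊆ sFilt G n (k+1) m :=
  fun _ hT j => Filt.comp_proj G n k hT j

theorem sFilt.subset_Filt (G : GenData) (n : ℕ+) (k : ℕ) (m : ℕ+) :
    sFilt G n (k+1) m ⊆ Filt G n (k+1) m := by
  intro T hT
  exact ⟨m, T, 𝟙 _, hT, by erw [CategoryTheory.Functor.map_id, Category.comp_id]⟩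

/-- Restriction of a `D`-diagram to a `P`-diagram. -/
def resP (G : GenData) (X : FreeST G ⥤ SSet) : PCat ⥤ SSet := Jfree G ⋙ X

/-- The inclusion `D̄_n^k ⟶ D̄_n^{k+1}` of sub-`D`-diagrams. -/
def filtIncl (G : GenData) (n : ℕ+) (k : ℕ) : FiltDiag G n k ⟶ FiltDiag G n (k+1) where
  app m := disc.map (Set.inclusion (Filt.mono G n k (Ob.val m)))
  naturality a b ψ := by
    apply NatTrans.ext
    funext x; refine ConcreteCategory.hom_ext _ _ fun T => ?_
    apply Subtype.ext
    rfl

/-- The inclusion `D̄_n^k ⟶ sD̄_n^{k+1}` of sub-`P`-diagrams. -/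
def filtInclS (G : GenData) (n : ℕ+) (k : ℕ) :
    resP G (FiltDiag G n k) ⟶ sFiltDiag G n (k+1) where
  app m := disc.map (Set.inclusion (Filt.subset_sFilt G n k (Ob.val m)))
  naturality a b ψ := by
    apply NatTrans.ext
    funext x; refine ConcreteCategory.hom_ext _ _ fun T => ?_
    apply Subtype.ext
    rfl

/-- The inclusion `sD̄_n^{k+1} ⟶ D̄_n^{k+1}` of sub-`P`-diagrams. -/
def sFiltIncl (G : GenData) (n : ℕ+) (k : ℕ) :
    sFiltDiag G n (k+1) ⟶ resP G (FiltDiag G n (k+1)) where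
  app m := disc.map (Set.inclusion (sFilt.subset_Filt G n k (Ob.val m)))
  naturality a b ψ := by
    apply NatTrans.ext
    funext x; refine ConcreteCategory.hom_ext _ _ fun T => ?_
    apply Subtype.ext
    rfl

/-!
An `m`-simplex of the pullback is a pair `(σ, τ)` of a `D`-natural map `σ` on `D̄_n^k × Δ[m]`
and a `P`-natural map `τ` on `sD̄_n^{k+1} × Δ[m]` that agree on `D̄_n^k`. Every
`T ∈ D̄_n^{k+1}` has a presentation `T = S ≫ Φ ψ` with `S ∈ sD̄_n^{k+1}` and `ψ` in `D`,
and the only candidate extension sends `T` to `X(ψ)(τ S)`; this gives uniqueness.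

For existence, `X(ψ)(τ S)` must not depend on the presentation. A morphism of `D` is either
in the image of `P`, or factors as `p ≫ α ≫ π` through its last non-projection generator `α`
with `π` in `P`; then every tree of `S ≫ Φ ψ` has root `α` over `S ≫ Φ p`. Comparing roots
reduces two such presentations to two presentations of `S ≫ Φ p`. When one of them is in the
image of `P`, the element lies in `sD̄_n^{k+1}`, all its root subtrees lie in `D̄_n^k`, and
the value is computed by `P`-naturality of `τ` and `D`-naturality of `σ`.
-/

section FreeSemiTheory

variable {G : GenData}

def genPath {a r : ℕ+} (α : G.gen a r) : FreeST.of G a ⟶ FreeST.of G r :=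
  Quiver.Hom.toPath (V := FreeOb G) (Arr.gen α)

theorem Jfree_map_projPath {a : ℕ+} (h : 1 < (a : ℕ)) (j : Fin a) :
    (Jfree G).map (projPath emptyGen a j) = projPath G a j := by
  rw [projPath, dif_pos h, projPath, dif_pos h]
  exact Paths.lift_toPath _ _

theorem FreeST.hom_induction
    {motive : ∀ {b v : ℕ+}, (FreeST.of G b ⟶ FreeST.of G v) → Prop}
    (Jfree_map : ∀ {b v : ℕ+} (π : FreeST.of emptyGen b ⟶ FreeST.of emptyGen v),
      motive ((Jfree G).map π))
    (comp_gen : ∀ {b a r v : ℕ+} (p : FreeST.of G b ⟶ FreeST.of G a) (α : G.gen a r)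
      (π : FreeST.of emptyGen r ⟶ FreeST.of emptyGen v),
      motive p → motive (p ≫ genPath α ≫ (Jfree G).map π))
    {b v : ℕ+} (ψ : FreeST.of G b ⟶ FreeST.of G v) : motive ψ := by
  suffices key : ∀ {w : FreeST G} (ψ : FreeST.of G b ⟶ w),
      (∃ π : FreeST.of emptyGen b ⟶ FreeST.of emptyGen w.val, ψ = (Jfree G).map π) ∨
      ∃ (a r : ℕ+) (p : FreeST.of G b ⟶ FreeST.of G a) (α : G.gen a r)
        (π : FreeST.of emptyGen r ⟶ FreeST.of emptyGen w.val),
        motive p ∧ ψ = p ≫ genPath α ≫ (Jfree G).map π by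
    obtain ⟨π, rfl⟩ | ⟨a, r, p, α, π, hp, rfl⟩ := key ψ
    exacts [Jfree_map π, comp_gen p α π hp]
  intro w ψ
  change @Quiver.Path (FreeOb G) _ _ _ at ψ
  induction ψ with
  | nil => exact .inl ⟨𝟙 _, ((Jfree G).map_id _).symm⟩
  | @cons w c p e ih =>
    obtain ⟨wv⟩ := w
    obtain ⟨cv⟩ := c
    change Arr G wv cv at e
    cases e with
    | gen α =>
      refine .inr ⟨wv, cv, p, α, 𝟙 _, ?_, ?_⟩
      · rcases ih with ⟨π, rfl⟩ | ⟨a, r, p, α, π, hp, rfl⟩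
        exacts [Jfree_map π, comp_gen p α π hp]
      · rfl
    | proj h j =>
      have hj : Quiver.Path.cons (V := FreeOb G) p (Arr.proj h j) =
          p ≫ (Jfree G).map (projPath emptyGen wv j) := by
        rw [Jfree_map_projPath h, projPath, dif_pos h]; rfl
      rcases ih with ⟨π, rfl⟩ | ⟨a, r, p, α, π, hp, rfl⟩
      · exact .inl ⟨π ≫ projPath emptyGen wv j, hj.trans ((Jfree G).map_comp _ _).symm⟩
      · refine .inr ⟨a, r, p, α, π ≫ projPath emptyGen wv j, hp, hj.trans ?_⟩
        erw [Functor.map_comp, Category.assoc, Category.assoc]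
        rfl

theorem exists_phi_map_Jfree_eq_proj {r v : ℕ+}
    (π : FreeST.of emptyGen r ⟶ FreeST.of emptyGen v) :
    ∃ f : Fin v → Fin r,
      ((phi G).map ((Jfree G).map π) : CompHom G r v) = fun i => .proj (f i) := by
  suffices key : ∀ {w : PCat} (π : FreeST.of emptyGen r ⟶ w), ∃ f : Fin w.val → Fin r,
      ((phi G).map ((Jfree G).map π) : CompHom G r w.val) = fun i => .proj (f i) from key π
  intro w π
  change @Quiver.Path (FreeOb emptyGen) _ _ _ at π
  induction π with
  | nil => exact ⟨id, rfl⟩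
  | @cons w c p e ih =>
    obtain ⟨wv⟩ := w
    obtain ⟨cv⟩ := c
    change Arr emptyGen wv cv at e
    cases e with
    | gen α => exact α.elim
    | proj h j =>
      obtain ⟨f, hf⟩ := ih
      refine ⟨fun _ => f j, ?_⟩
      show (fun _ => ((phi G).map ((Jfree G).map p) : CompHom G r wv) j) = _
      rw [hf]

theorem comp_phi_map_Jfree {n r v : ℕ+} (S : CompHom G n r)
    {π : FreeST.of emptyGen r ⟶ FreeST.of emptyGen v} {f : Fin v → Fin r}
    (hf : ((phi G).map ((Jfree G).map π) : CompHom G r v) = fun i => .proj (f i)) :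
    ((S : CompOb.of G n ⟶ CompOb.of G r) ≫ (phi G).map ((Jfree G).map π) : CompHom G n v) =
      fun i => S (f i) := by
  erw [hf]; rfl

theorem comp_phi_map_comp_genPath {n b a r v : ℕ+} (S : CompHom G n b)
    (p : FreeST.of G b ⟶ FreeST.of G a) (α : G.gen a r)
    {π : FreeST.of emptyGen r ⟶ FreeST.of emptyGen v} {f : Fin v → Fin r}
    (hf : ((phi G).map ((Jfree G).map π) : CompHom G r v) = fun i => .proj (f i)) :
    ((S : CompOb.of G n ⟶ CompOb.of G b) ≫ (phi G).map (p ≫ genPath α ≫ (Jfree G).map π) :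
        CompHom G n v) =
      fun i => .node α (f i) ((S : CompOb.of G n ⟶ CompOb.of G b) ≫ (phi G).map p) := by
  erw [Functor.map_comp, Functor.map_comp, hf]; rfl

theorem Arr.one_lt_and_eq_one {a c : ℕ+} (e : Arr emptyGen a c) : 1 < (a : ℕ) ∧ c = 1 := by
  cases e with
  | gen α => exact α.elim
  | proj h j => exact ⟨h, rfl⟩

theorem PCat.length_eq_zero_of_one_lt {a w : FreeOb emptyGen} (π : Quiver.Path a w)
    (hw : 1 < (w.val : ℕ)) : π.length = 0 := by
  cases π with
  | nil => rfl
  | cons p e =>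
    rw [(Arr.one_lt_and_eq_one e).2] at hw
    exact absurd hw (lt_irrefl 1)

theorem PCat.path_eq_nil {r : FreeOb emptyGen} (π : Quiver.Path r r) : π = .nil := by
  cases π with
  | nil => rfl
  | cons p e =>
    have he := Arr.one_lt_and_eq_one e
    obtain rfl := Quiver.Path.eq_of_length_zero p (PCat.length_eq_zero_of_one_lt p he.1)
    exact absurd he.1 (by rw [he.2]; exact lt_irrefl 1)

theorem phi_map_Jfree_injective {r v : ℕ+}
    {π π' : FreeST.of emptyGen r ⟶ FreeST.of emptyGen v}
    (h : (phi G).map ((Jfree G).map π) = (phi G).map ((Jfree G).map π')) : π = π' := by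
  suffices key : ∀ {w : PCat} (π π' : FreeST.of emptyGen r ⟶ w),
      (phi G).map ((Jfree G).map π) = (phi G).map ((Jfree G).map π') → π = π' from
    key π π' h
  intro w π π' h
  change @Quiver.Path (FreeOb emptyGen) _ _ _ at π π'
  cases π with
  | nil => exact (PCat.path_eq_nil π').symm
  | @cons b _ p e =>
    cases π' with
    | nil => exact PCat.path_eq_nil _
    | @cons b' _ p' e' =>
      have he := Arr.one_lt_and_eq_one e
      have he' := Arr.one_lt_and_eq_one e'
      obtain rfl := Quiver.Path.eq_of_length_zero (V := FreeOb emptyGen) p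
        (PCat.length_eq_zero_of_one_lt p he.1)
      obtain rfl := Quiver.Path.eq_of_length_zero (V := FreeOb emptyGen) p'
        (PCat.length_eq_zero_of_one_lt p' he'.1)
      obtain rfl := PCat.path_eq_nil p
      obtain rfl := PCat.path_eq_nil p'
      obtain ⟨wv⟩ := w
      change Arr emptyGen r wv at e e'
      cases e with
      | gen α => exact α.elim
      | proj _ j =>
        cases e' with
        | gen α => exact α.elim
        | proj _ j' =>
          obtain rfl : j = j' := CTree.proj.inj (congrFun h 0 : CTree.proj j = CTree.proj j')
          rfl

theorem exists_of_comp_phi_map_apply_eq_node {n b v a r : ℕ+} (S : CompHom G n b)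
    (ψ : FreeST.of G b ⟶ FreeST.of G v) (j : Fin v) (α : G.gen a r) (i : Fin r)
    (U : CompHom G n a)
    (h : ((S : CompOb.of G n ⟶ CompOb.of G b) ≫ (phi G).map ψ : CompHom G n v) j =
      .node α i U) :
    (∃ j', S j' = .node α i U) ∨
      ∃ p : FreeST.of G b ⟶ FreeST.of G a,
        U = (S : CompOb.of G n ⟶ CompOb.of G b) ≫ (phi G).map p := by
  induction ψ using FreeST.hom_induction with
  | Jfree_map π =>
    obtain ⟨f, hf⟩ := exists_phi_map_Jfree_eq_proj (G := G) π
    exact .inl ⟨f j, (congrFun (comp_phi_map_Jfree S hf) j).symm.trans h⟩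
  | comp_gen p α' π _ =>
    obtain ⟨f, hf⟩ := exists_phi_map_Jfree_eq_proj (G := G) π
    obtain ⟨rfl, rfl, -, -, hU⟩ :=
      CTree.node.inj ((congrFun (comp_phi_map_comp_genPath S p α' hf) j).symm.trans h)
    exact .inr ⟨p, (eq_of_heq hU).symm⟩

end FreeSemiTheory

theorem Filt.mem_of_node_mem {G : GenData} {n : ℕ+} (k : ℕ) {a r : ℕ+} (α : G.gen a r)
    (i : Fin r) {U : CompHom G n a} (h : (fun _ : Fin 1 => .node α i U) ∈ Filt G n k 1) :
    U ∈ Filt G n k a := by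
  induction k generalizing a r with
  | zero =>
    obtain ⟨ψ, hψ⟩ := h
    have h0 : ((𝟙 (CompOb.of G n)) ≫ (phi G).map ψ : CompHom G n 1) 0 = .node α i U := by
      erw [Category.id_comp, ← hψ]; rfl
    rcases exists_of_comp_phi_map_apply_eq_node (compId G n) ψ 0 α i U h0 with
      ⟨_, h⟩ | ⟨p, rfl⟩
    · cases h
    · exact ⟨p, Category.id_comp _⟩
  | succ k ih =>
    obtain ⟨b, S, ψ, hS, hψ⟩ := h
    rcases exists_of_comp_phi_map_apply_eq_node S ψ 0 α i U (congrFun hψ 0).symm with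
      ⟨j, hj⟩ | ⟨p, rfl⟩
    · exact Filt.mono G n k a (ih α i (hj ▸ hS j))
    · exact ⟨b, S, p, hS, rfl⟩

theorem map_comp_app_apply {C : Type} [Category C] (F : C ⥤ SSet) {a b c : C} (f : a ⟶ b)
    (g : b ⟶ c) {y : SimplexCategoryᵒᵖ} (x : (F.obj a).obj y) :
    (F.map (f ≫ g)).app y x = (F.map g).app y ((F.map f).app y x) := by
  rw [F.map_comp]; rfl

theorem map_id_app_apply {C : Type} [Category C] (F : C ⥤ SSet) {a : C}
    {y : SimplexCategoryᵒᵖ} (x : (F.obj a).obj y) : (F.map (𝟙 a)).app y x = x := by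
  rw [F.map_id]; rfl

section Extension

variable {G : GenData} {n : ℕ+} {k : ℕ} {X : FreeST G ⥤ SSet} {K : SSet}
  (σ : prodConst (FiltDiag G n k) K ⟶ X) (τ : prodConst (sFiltDiag G n (k+1)) K ⟶ resP G X)
  {y : SimplexCategoryᵒᵖ} (κ : K.obj y)

theorem tau_app_eq_sigma_app
    (hστ : Functor.whiskerLeft (Jfree G) σ = prodConst.mapX (filtInclS G n k) K ≫ τ)
    {a : ℕ+} {R : CompHom G n a} (hR : R ∈ Filt G n k a) :
    (τ.app (FreeST.of emptyGen a)).app y ⟨⟨R, Filt.subset_sFilt G n k a hR⟩, κ⟩ =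
      (σ.app (FreeST.of G a)).app y ⟨⟨R, hR⟩, κ⟩ :=
  (types_congr_hom (NatTrans.congr_app (NatTrans.congr_app hστ (FreeST.of emptyGen a)) y)
    ⟨⟨R, hR⟩, κ⟩).symm

theorem map_tau_app_eq_of_mem_Filt
    (hστ : Functor.whiskerLeft (Jfree G) σ = prodConst.mapX (filtInclS G n k) K ≫ τ)
    {a b : ℕ+} {R : CompHom G n a} (hR : R ∈ Filt G n k a)
    (χ : FreeST.of G a ⟶ FreeST.of G b)
    (hRχ : ((R : CompOb.of G n ⟶ CompOb.of G a) ≫ (phi G).map χ : CompHom G n b) ∈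
      sFilt G n (k+1) b) :
    (X.map χ).app y
        ((τ.app (FreeST.of emptyGen a)).app y ⟨⟨R, Filt.subset_sFilt G n k a hR⟩, κ⟩) =
      (τ.app (FreeST.of emptyGen b)).app y ⟨⟨_, hRχ⟩, κ⟩ := by
  refine (congrArg _ (tau_app_eq_sigma_app σ τ κ hστ hR)).trans ?_
  refine (natApply σ χ y ⟨⟨R, hR⟩, κ⟩).symm.trans ?_
  exact (tau_app_eq_sigma_app σ τ κ hστ (Filt.closed G n k hR χ)).symm

theorem tau_app_congr {a : ℕ+} {S S' : CompHom G n a} (h : S = S') (hS : S ∈ sFilt G n (k+1) a)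
    (hS' : S' ∈ sFilt G n (k+1) a) :
    (τ.app (FreeST.of emptyGen a)).app y ⟨⟨S, hS⟩, κ⟩ =
      (τ.app (FreeST.of emptyGen a)).app y ⟨⟨S', hS'⟩, κ⟩ := by
  subst h; rfl

theorem map_tau_app_eq_tau_app
    (hστ : Functor.whiskerLeft (Jfree G) σ = prodConst.mapX (filtInclS G n k) K ≫ τ)
    {b v : ℕ+} (ψ : FreeST.of G b ⟶ FreeST.of G v) {S : CompHom G n b}
    (hS : S ∈ sFilt G n (k+1) b)
    (hT : ((S : CompOb.of G n ⟶ CompOb.of G b) ≫ (phi G).map ψ : CompHom G n v) ∈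
      sFilt G n (k+1) v) :
    (X.map ψ).app y ((τ.app (FreeST.of emptyGen b)).app y ⟨⟨S, hS⟩, κ⟩) =
      (τ.app (FreeST.of emptyGen v)).app y ⟨⟨_, hT⟩, κ⟩ := by
  induction ψ using FreeST.hom_induction with
  | Jfree_map π => exact (natApply τ π y ⟨⟨S, hS⟩, κ⟩).symm
  | @comp_gen b a r v p α π ih =>
    obtain ⟨f, hf⟩ := exists_phi_map_Jfree_eq_proj (G := G) π
    -- every tree of the target has root `α` over `S ≫ Φ p`, which therefore lies in `D̄_n^k`
    have hU : ((S : CompOb.of G n ⟶ CompOb.of G b) ≫ (phi G).map p : CompHom G n a) ∈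
        Filt G n k a := by
      have h0 := hT 0
      erw [congrFun (comp_phi_map_comp_genPath S p α hf) 0] at h0
      exact Filt.mem_of_node_mem k α (f 0) h0
    have hU' := Filt.subset_sFilt G n k a hU
    have hcomp : ((S : CompOb.of G n ⟶ CompOb.of G b) ≫ (phi G).map p) ≫
        (phi G).map (genPath α ≫ (Jfree G).map π) =
        (S : CompOb.of G n ⟶ CompOb.of G b) ≫
          (phi G).map (p ≫ genPath α ≫ (Jfree G).map π) :=
      (Category.assoc _ _ _).trans (congrArg (_ ≫ ·) ((phi G).map_comp p _).symm)
    refine (map_comp_app_apply X p _ _).trans ?_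
    refine (congrArg _ (ih hS hU')).trans ?_
    refine (map_tau_app_eq_of_mem_Filt σ τ κ hστ hU _ (hcomp ▸ hT)).trans ?_
    exact tau_app_congr τ κ hcomp _ _

theorem map_tau_app_eq_of_comp_eq
    (hστ : Functor.whiskerLeft (Jfree G) σ = prodConst.mapX (filtInclS G n k) K ≫ τ)
    {b b' v : ℕ+} {S : CompHom G n b} {S' : CompHom G n b'}
    (hS : S ∈ sFilt G n (k+1) b) (hS' : S' ∈ sFilt G n (k+1) b')
    (ψ : FreeST.of G b ⟶ FreeST.of G v) (ψ' : FreeST.of G b' ⟶ FreeST.of G v)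
    (he : ((S : CompOb.of G n ⟶ CompOb.of G b) ≫ (phi G).map ψ : CompHom G n v) =
      (S' : CompOb.of G n ⟶ CompOb.of G b') ≫ (phi G).map ψ') :
    (X.map ψ).app y ((τ.app (FreeST.of emptyGen b)).app y ⟨⟨S, hS⟩, κ⟩) =
      (X.map ψ').app y ((τ.app (FreeST.of emptyGen b')).app y ⟨⟨S', hS'⟩, κ⟩) := by
  induction ψ using FreeST.hom_induction generalizing b' S' with
  | Jfree_map π =>
    have hT := sFilt.closed G n (k+1) hS π
    refine (map_tau_app_eq_tau_app σ τ κ hστ _ hS hT).trans ?_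
    refine (tau_app_congr τ κ he hT (he ▸ hT)).trans ?_
    exact (map_tau_app_eq_tau_app σ τ κ hστ ψ' hS' (he ▸ hT)).symm
  | comp_gen p α π ih =>
    induction ψ' using FreeST.hom_induction with
    | Jfree_map π' =>
      have hT' := sFilt.closed G n (k+1) hS' π'
      refine (map_tau_app_eq_tau_app σ τ κ hστ _ hS (he ▸ hT')).trans ?_
      refine (tau_app_congr τ κ he (he ▸ hT') hT').trans ?_
      exact (map_tau_app_eq_tau_app σ τ κ hστ _ hS' hT').symm
    | comp_gen p' α' π' _ =>
      obtain ⟨f, hf⟩ := exists_phi_map_Jfree_eq_proj (G := G) π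
      obtain ⟨f', hf'⟩ := exists_phi_map_Jfree_eq_proj (G := G) π'
      have hnode : ∀ i,
          CTree.node α (f i) ((S : CompOb.of G n ⟶ CompOb.of G _) ≫ (phi G).map p) =
          .node α' (f' i) ((S' : CompOb.of G n ⟶ CompOb.of G _) ≫ (phi G).map p') := fun i =>
        (congrFun (comp_phi_map_comp_genPath S p α hf) i).symm.trans
          ((congrFun he i).trans (congrFun (comp_phi_map_comp_genPath S' p' α' hf') i))
      -- equal roots force equal generators, equal tails in `P` and equal subtrees
      obtain ⟨rfl, rfl, hα, -, hU⟩ := CTree.node.inj (hnode 0)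
      obtain rfl := eq_of_heq hα
      have hff : f = f' := funext fun i => eq_of_heq (CTree.node.inj (hnode i)).2.2.2.1
      obtain rfl : π = π' := phi_map_Jfree_injective (hf.trans (hff ▸ hf'.symm))
      refine (map_comp_app_apply X p _ _).trans ?_
      refine (congrArg _ (ih hS hS' p' (eq_of_heq hU))).trans ?_
      exact (map_comp_app_apply X p' _ _).symm

/-- The extension of `τ` at `(T, κ)`, computed from a chosen presentation `T = S ≫ Φ ψ`
with `S ∈ sD̄_n^{k+1}`. -/
def extendApp {m : ℕ+} {T : CompHom G n m} (hT : T ∈ Filt G n (k+1) m) :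
    (X.obj (FreeST.of G m)).obj y :=
  (X.map hT.choose_spec.choose_spec.choose).app y
    ((τ.app (FreeST.of emptyGen _)).app y
      ⟨⟨hT.choose_spec.choose, hT.choose_spec.choose_spec.choose_spec.1⟩, κ⟩)

theorem extendApp_eq
    (hστ : Functor.whiskerLeft (Jfree G) σ = prodConst.mapX (filtInclS G n k) K ≫ τ)
    {m b : ℕ+} {T : CompHom G n m} (hT : T ∈ Filt G n (k+1) m) {S : CompHom G n b}
    (hS : S ∈ sFilt G n (k+1) b) (ψ : FreeST.of G b ⟶ FreeST.of G m)
    (he : T = (S : CompOb.of G n ⟶ CompOb.of G b) ≫ (phi G).map ψ) :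
    extendApp τ κ hT =
      (X.map ψ).app y ((τ.app (FreeST.of emptyGen b)).app y ⟨⟨S, hS⟩, κ⟩) :=
  map_tau_app_eq_of_comp_eq σ τ κ hστ _ hS _ ψ
    (hT.choose_spec.choose_spec.choose_spec.2.symm.trans he)

theorem extendApp_naturality {m : ℕ+} {T : CompHom G n m} (hT : T ∈ Filt G n (k+1) m)
    {y' : SimplexCategoryᵒᵖ} (θ : y ⟶ y') :
    extendApp τ (K.map θ κ) hT = (X.obj (FreeST.of G m)).map θ (extendApp τ κ hT) := by
  unfold extendApp
  exact (congrArg ((X.map hT.choose_spec.choose_spec.choose).app y')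
    (types_congr_hom ((τ.app (FreeST.of emptyGen hT.choose)).naturality θ)
      ⟨⟨_, hT.choose_spec.choose_spec.choose_spec.1⟩, κ⟩)).trans
    (types_congr_hom ((X.map _).naturality θ) _)

def extend (hστ : Functor.whiskerLeft (Jfree G) σ = prodConst.mapX (filtInclS G n k) K ≫ τ) :
    prodConst (FiltDiag G n (k+1)) K ⟶ X where
  app m :=
    { app := fun y => ↾(fun p => extendApp τ p.2 p.1.2)
      naturality := fun y y' θ => by
        refine ConcreteCategory.hom_ext _ _ fun p => ?_
        exact extendApp_naturality τ p.2 p.1.2 θ }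
  naturality m m' ψ₁ := by
    apply NatTrans.ext; funext y
    refine ConcreteCategory.hom_ext _ _ fun ⟨⟨T, hT⟩, κ⟩ => ?_
    obtain ⟨b, S, ψ, hS, he⟩ := id hT
    have he₁ : (T : CompOb.of G n ⟶ CompOb.of G _) ≫ (phi G).map ψ₁ =
        (S : CompOb.of G n ⟶ CompOb.of G b) ≫ (phi G).map (ψ ≫ ψ₁) :=
      (congrArg (· ≫ (phi G).map ψ₁) he).trans
        ((Category.assoc _ _ _).trans (congrArg (_ ≫ ·) ((phi G).map_comp ψ ψ₁).symm))
    exact (extendApp_eq σ τ κ hστ _ hS (ψ ≫ ψ₁) he₁).trans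
      ((map_comp_app_apply X ψ ψ₁ _).trans
        (congrArg _ (extendApp_eq σ τ κ hστ hT hS ψ he).symm))

theorem filtIncl_comp_extend
    (hστ : Functor.whiskerLeft (Jfree G) σ = prodConst.mapX (filtInclS G n k) K ≫ τ) :
    prodConst.mapX (filtIncl G n k) K ≫ extend σ τ hστ = σ := by
  apply NatTrans.ext; funext m; apply NatTrans.ext; funext y
  refine ConcreteCategory.hom_ext _ _ fun ⟨⟨R, hR⟩, κ⟩ => ?_
  have hR' := Filt.subset_sFilt G n k _ hR
  have he : R = (R : CompOb.of G n ⟶ CompOb.of G _) ≫ (phi G).map (𝟙 m) :=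
    ((congrArg (_ ≫ ·) ((phi G).map_id m)).trans (Category.comp_id _)).symm
  exact (extendApp_eq σ τ κ hστ _ hR' (𝟙 m) he).trans
    ((map_id_app_apply X _).trans (tau_app_eq_sigma_app σ τ κ hστ hR))

theorem sFiltIncl_comp_extend
    (hστ : Functor.whiskerLeft (Jfree G) σ = prodConst.mapX (filtInclS G n k) K ≫ τ) :
    prodConst.mapX (sFiltIncl G n k) K ≫ Functor.whiskerLeft (Jfree G) (extend σ τ hστ) =
      τ := by
  apply NatTrans.ext; funext a; apply NatTrans.ext; funext y
  refine ConcreteCategory.hom_ext _ _ fun ⟨⟨S, hS⟩, κ⟩ => ?_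
  have he : S = (S : CompOb.of G n ⟶ CompOb.of G _) ≫ (phi G).map (𝟙 ((Jfree G).obj a)) :=
    ((congrArg (_ ≫ ·) ((phi G).map_id _)).trans (Category.comp_id _)).symm
  exact (extendApp_eq σ τ κ hστ _ hS (𝟙 _) he).trans (map_id_app_apply X _)

end Extension

theorem FiltDiag.hom_ext {G : GenData} {n : ℕ+} {k : ℕ} {X : FreeST G ⥤ SSet} {K : SSet}
    {m₁ m₂ : prodConst (FiltDiag G n (k+1)) K ⟶ X}
    (h : prodConst.mapX (sFiltIncl G n k) K ≫ Functor.whiskerLeft (Jfree G) m₁ =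
      prodConst.mapX (sFiltIncl G n k) K ≫ Functor.whiskerLeft (Jfree G) m₂) :
    m₁ = m₂ := by
  apply NatTrans.ext; funext m; apply NatTrans.ext; funext y
  refine ConcreteCategory.hom_ext _ _ fun ⟨⟨T, hT⟩, κ⟩ => ?_
  obtain ⟨b, S, ψ, hS, rfl⟩ := hT
  have hS' := types_congr_hom (NatTrans.congr_app (NatTrans.congr_app h (FreeST.of emptyGen b)) y)
    ⟨⟨S, hS⟩, κ⟩
  exact (natApply m₁ ψ y ⟨⟨S, _⟩, κ⟩).trans
    ((congrArg _ hS').trans (natApply m₂ ψ y _).symm)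

theorem mapping_complex_square_is_pullback (G : GenData) (n : ℕ+) (k : ℕ)
    (X : FreeST G ⥤ SSet) :
    IsPullback
      (MapCx.pre (filtIncl G n k) X)
      (MapCx.whisk (Jfree G) (FiltDiag G n (k+1)) X ≫
        MapCx.pre (sFiltIncl G n k) (resP G X))
      (MapCx.whisk (Jfree G) (FiltDiag G n k) X)
      (MapCx.pre (filtInclS G n k) (resP G X)) := by
  refine IsPullback.of_forall_isPullback_app fun x =>
    (Types.isPullback_iff _ _ _ _).2 ⟨rfl, fun m₁ m₂ h => FiltDiag.hom_ext h.2, ?_⟩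
  exact fun σ τ hστ =>
    ⟨extend σ τ hστ, filtIncl_comp_extend σ τ hστ, sFiltIncl_comp_extend σ τ hστ⟩

end SemiThPaper
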